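/- Every binary self-dual [n = 2k, k] code C with n > 2 whose last two coordinates are not identically equal is equivalent, via a permutation fixing the last two coordinates setwise, to a code with generator matrix of the form: first row (x₁ … x_{k−1}, 0 … 0, 1, 0), remaining rows (I_{k−1} | A | xᵀ | xᵀ) where x = (x₁,…,x_{k−1}), and (I_{k−1} | A) generates a self-dual [n−2, k−1] code. -/

import Mathlib

open Finset

abbrev Code (n : ℕ) := Submodule (ZMod 2) (Fin n → ZMod 2)

def dotp {n : ℕ} (x y : Fin n → ZMod 2) : ZMod 2 := ∑ i, x i * y i

def dualCode {n : ℕ} (C : Code n) : Code n where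
  carrier := {y | ∀ x ∈ C, dotp x y = 0}
  zero_mem' := by intro x _; simp [dotp]
  add_mem' := by
    intro y z hy hz x hx
    have h1 := hy x hx
    have h2 := hz x hx
    simp only [dotp, Set.mem_setOf_eq] at *
    simp [Pi.add_apply, mul_add, Finset.sum_add_distrib, h1, h2]
  smul_mem' := by
    intro c y hy x hx
    have h1 := hy x hx
    simp only [dotp, Set.mem_setOf_eq] at *
    simp [Pi.smul_apply, smul_eq_mul, mul_left_comm, ← Finset.mul_sum, h1]

def IsSelfDual {n : ℕ} (C : Code n) : Prop := C = dualCode C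

def IsSelfOrthogonal {n : ℕ} (C : Code n) : Prop := C ≤ dualCode C

def wt {n : ℕ} (x : Fin n → ZMod 2) : ℕ := (Finset.univ.filter (fun i => x i ≠ 0)).card

def sysRow0 (k : ℕ) (x : Fin (k-1) → ZMod 2) : Fin (2*k) → ZMod 2 :=
  fun j => if h : (j : ℕ) < k-1 then x ⟨j, h⟩ else if (j : ℕ) = 2*k-2 then 1 else 0

def sysRow (k : ℕ) (A : Matrix (Fin (k-1)) (Fin (k-1)) (ZMod 2))
    (x : Fin (k-1) → ZMod 2) (i : Fin (k-1)) : Fin (2*k) → ZMod 2 :=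
  fun j => if h : (j : ℕ) < k-1 then (if (j : ℕ) = (i : ℕ) then 1 else 0)
    else if h2 : (j : ℕ) < 2*k-2 then A i ⟨(j : ℕ) - (k-1), by omega⟩ else x i

def sysRowIA (k : ℕ) (A : Matrix (Fin (k-1)) (Fin (k-1)) (ZMod 2))
    (i : Fin (k-1)) : Fin (2*k-2) → ZMod 2 :=
  fun j => if h : (j : ℕ) < k-1 then (if (j : ℕ) = (i : ℕ) then 1 else 0)
    else A i ⟨(j : ℕ) - (k-1), by have := j.isLt; omega⟩

/-
Let `C₀ ⊆ C` be the subcode of words that agree on the last two coordinates `a`, `b`. Since some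
`y ∈ C` has `y a ≠ y b`, `C = C₀ + ⟨y⟩` and `dim C₀ = k - 1`. Deleting `a` and `b` is injective on
`C₀`, because a word of `C₀` vanishing off `{a, b}` but not at `a` would have inner product `1`
with `y`; and it preserves inner products on `C₀` in characteristic `2`. So the punctured code is
a self-dual `[2k - 2, k - 1]` code, and moving one of its information sets to the front gives it a
generator matrix `(I | A)`. Lifting these rows back to `C₀` yields the rows `(I | A | xᵀ | xᵀ)`,
which span `C₀`. Finally `s = (x, 0, 1, 0)` and its image under the transposition of `a` and `b`
are both orthogonal to `C₀`, and their sum `e_a + e_b` has inner product `1` with `y`; so one of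
them is orthogonal to `y`, hence lies in `C^⊥ = C`, and after possibly swapping `a` and `b` it
completes the generator matrix.
-/

open Module Submodule LinearMap Function Set

section DualCode

variable {n : ℕ} {C : Code n}

lemma dotp_eq_dotProduct (x y : Fin n → ZMod 2) : dotp x y = x ⬝ᵥ y := rfl

lemma dualCode_eq_orthogonal (C : Code n) :
    dualCode C = BilinForm.orthogonal (dotProductBilin (ZMod 2) (ZMod 2)) C := rfl

lemma finrank_dualCode (C : Code n) :
    finrank (ZMod 2) (dualCode C) = n - finrank (ZMod 2) C := by
  rw [dualCode_eq_orthogonal, BilinForm.finrank_orthogonal, finrank_fin_fun]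
  exact ⟨fun x hx => dotProduct_eq_zero x hx,
    fun y hy => dotProduct_eq_zero y fun x => dotProduct_comm y x ▸ hy x⟩

lemma mem_dualCode_span {S : Set (Fin n → ZMod 2)} {y : Fin n → ZMod 2} :
    y ∈ dualCode (span (ZMod 2) S) ↔ ∀ x ∈ S, dotp x y = 0 :=
  span_le (p := ker ((dotProductBilin (ZMod 2) (ZMod 2)).flip y))

lemma dotp_funLeft_perm (σ : Equiv.Perm (Fin n)) (x y : Fin n → ZMod 2) :
    dotp (funLeft (ZMod 2) (ZMod 2) σ x) (funLeft (ZMod 2) (ZMod 2) σ y) = dotp x y :=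
  Equiv.sum_comp σ fun i => x i * y i

lemma IsSelfDual.two_mul_finrank (hC : IsSelfDual C) : 2 * finrank (ZMod 2) C = n := by
  have hdual := finrank_dualCode C
  have hle : finrank (ZMod 2) C ≤ n := (Submodule.finrank_le C).trans_eq (finrank_fin_fun _)
  rw [← hC] at hdual
  omega

lemma IsSelfOrthogonal.isSelfDual_of_two_mul_finrank_eq (hC : IsSelfOrthogonal C)
    (hdim : 2 * finrank (ZMod 2) C = n) : IsSelfDual C :=
  eq_of_le_of_finrank_le hC (by rw [finrank_dualCode]; omega)

lemma IsSelfDual.map_perm (hC : IsSelfDual C) (σ : Equiv.Perm (Fin n)) :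
    IsSelfDual (C.map (funLeft (ZMod 2) (ZMod 2) σ)) := by
  refine IsSelfOrthogonal.isSelfDual_of_two_mul_finrank_eq ?_ ?_
  · rintro _ ⟨y, hy, rfl⟩ _ ⟨x, hx, rfl⟩
    rw [dotp_funLeft_perm]
    exact hC.le hy x hx
  · have := (LinearEquiv.funCongrLeft (ZMod 2) (ZMod 2) σ).finrank_map_eq C
    exact this.symm ▸ hC.two_mul_finrank

end DualCode

def IsInformationSet {R : Type*} [Semiring R] {n m : ℕ} (V : Submodule R (Fin n → R))
    (f : Fin m → Fin n) : Prop :=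
  ∀ v ∈ V, (∀ r, v (f r) = 0) → v = 0

section SystematicBasis

variable {R : Type*} [CommRing R] {n m : ℕ} (hmn : m ≤ n) {g : Fin m → Fin n → R}

lemma sum_smul_apply_castLE
    (hg : ∀ i r, g i (Fin.castLE hmn r) = (Pi.single i 1 : Fin m → R) r)
    (c : Fin m → R) (r : Fin m) : (∑ i, c i • g i) (Fin.castLE hmn r) = c r := by
  simp [hg, Pi.single_apply]

lemma eq_sum_smul_of_mem_span
    (hg : ∀ i r, g i (Fin.castLE hmn r) = (Pi.single i 1 : Fin m → R) r)
    {v : Fin n → R} (hv : v ∈ span R (range g)) : v = ∑ i, v (Fin.castLE hmn i) • g i := by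
  obtain ⟨c, rfl⟩ := (mem_span_range_iff_exists_fun R).1 hv
  simp_rw [sum_smul_apply_castLE hmn hg]

lemma isInformationSet_span
    (hg : ∀ i r, g i (Fin.castLE hmn r) = (Pi.single i 1 : Fin m → R) r) :
    IsInformationSet (span R (range g)) (Fin.castLE hmn) := fun v hv h0 => by
  rw [eq_sum_smul_of_mem_span hmn hg hv]
  simp [h0]

lemma IsInformationSet.eq_span {W : Submodule R (Fin n → R)}
    (hW : IsInformationSet W (Fin.castLE hmn)) (hgW : ∀ i, g i ∈ W)
    (hg : ∀ i r, g i (Fin.castLE hmn r) = (Pi.single i 1 : Fin m → R) r) :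
    W = span R (range g) := by
  refine le_antisymm (fun v hv => ?_) (span_le.2 (range_subset_iff.2 hgW))
  have hrest : v - ∑ i, v (Fin.castLE hmn i) • g i ∈ W :=
    W.sub_mem hv (W.sum_mem fun i _ => W.smul_mem _ (hgW i))
  rw [sub_eq_zero.1 (hW _ hrest fun r => by simp [sum_smul_apply_castLE hmn hg])]
  exact sum_mem fun i _ => smul_mem _ _ (subset_span (mem_range_self i))

end SystematicBasis

section InformationSet

variable {K : Type*} [Field K] {n m : ℕ}

/- The coordinate functionals span the dual of `V`, and a basis of the dual chosen among them is
an information set. -/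
lemma Submodule.exists_isInformationSet (V : Submodule K (Fin n → K)) :
    ∃ f : Fin (finrank K V) → Fin n, Injective f ∧ IsInformationSet V f := by
  classical
  set L : Fin n → Module.Dual K V := fun i => (proj i).comp V.subtype
  have hspan : span K (range L) = ⊤ := by
    refine eq_top_iff.2 fun φ _ => mem_span_of_iInf_ker_le_ker fun v hv => ?_
    have : v = 0 := Subtype.ext (funext fun i => by simpa [L] using (mem_iInf _).1 hv i)
    simp [this]
  obtain ⟨κ, a, ha, hsp, hli⟩ := exists_linearIndependent' K L
  have : Fintype κ := Fintype.ofInjective a ha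
  let B : Basis κ K (Module.Dual K V) := Basis.mk hli (by rw [hsp, hspan])
  have hcard : Fintype.card κ = finrank K V := by
    rw [← Subspace.dual_finrank_eq, finrank_eq_card_basis B]
  let e := Fintype.equivFinOfCardEq hcard
  refine ⟨a ∘ e.symm, ha.comp e.symm.injective, fun v hv h0 => ?_⟩
  have hker : span K (range (L ∘ a)) ≤ ker (Module.Dual.eval K V ⟨v, hv⟩) :=
    span_le.2 <| range_subset_iff.2 fun r => by simpa [L] using h0 (e r)
  rw [hsp, hspan, top_le_iff, ker_eq_top] at hker
  simpa using (Module.forall_dual_apply_eq_zero_iff K (⟨v, hv⟩ : V)).1 (LinearMap.congr_fun hker)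

lemma Submodule.exists_perm_isInformationSet_castLE (V : Submodule K (Fin n → K))
    (hm : finrank K V = m) (hmn : m ≤ n) :
    ∃ σ : Equiv.Perm (Fin n), IsInformationSet (V.map (funLeft K K σ)) (Fin.castLE hmn) := by
  subst hm
  obtain ⟨f, hf, hV⟩ := V.exists_isInformationSet
  obtain ⟨σ, hσ⟩ := Equiv.Perm.exists_extending_pair _ _ (Fin.castLE_injective hmn) hf
  refine ⟨σ, ?_⟩
  rintro _ ⟨v, hv, rfl⟩ h0
  rw [hV v hv fun r => by simpa [hσ] using h0 r, map_zero]

lemma IsInformationSet.exists_castLE_eq_single {W : Submodule K (Fin n → K)} (hmn : m ≤ n)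
    (hW : IsInformationSet W (Fin.castLE hmn)) (hdim : finrank K W = m) :
    ∃ g : Fin m → Fin n → K,
      (∀ i, g i ∈ W) ∧ ∀ i r, g i (Fin.castLE hmn r) = (Pi.single i 1 : Fin m → K) r := by
  set p : W →ₗ[K] (Fin m → K) := (funLeft K K (Fin.castLE hmn)).domRestrict W
  have hp : Injective p := by
    rw [← ker_eq_bot, ker_eq_bot']
    exact fun v hv => Subtype.ext (hW v v.2 (congrFun hv))
  have hp' : Surjective p :=
    (injective_iff_surjective_of_finrank_eq_finrank (by simp [hdim])).1 hp
  choose g hg using fun i => hp' (Pi.single i 1)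
  exact ⟨fun i => g i, fun i => (g i).2, fun i r => congrFun (hg i) r⟩

end InformationSet

lemma ZMod.two_ne_iff_eq_add_one {p q : ZMod 2} : p ≠ q ↔ q = p + 1 := by
  revert p q
  decide

def eqCoords {n : ℕ} (a b : Fin n) : Code n := eqLocus (proj a) (proj b)

lemma mem_eqCoords {n : ℕ} {a b : Fin n} {v : Fin n → ZMod 2} :
    v ∈ eqCoords a b ↔ v a = v b :=
  Iff.rfl

def dropLastTwo (n : ℕ) : (Fin n → ZMod 2) →ₗ[ZMod 2] (Fin (n - 2) → ZMod 2) :=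
  funLeft (ZMod 2) (ZMod 2) (Fin.castLE (n.sub_le 2))

@[simp] lemma dropLastTwo_apply {n : ℕ} (v : Fin n → ZMod 2) (j : Fin (n - 2)) :
    dropLastTwo n v j = v (Fin.castLE (n.sub_le 2) j) := rfl

section LastTwoCoords

variable {n : ℕ} {a b : Fin n} {D : Code n} {y : Fin n → ZMod 2}

lemma span_insert_inf_eqCoords (hy : y ∈ D) (hyab : y a ≠ y b) :
    span (ZMod 2) (insert y ((D ⊓ eqCoords a b : Code n) : Set (Fin n → ZMod 2))) = D := by
  refine le_antisymm (span_le.2 (insert_subset hy inf_le_left)) fun v hv => ?_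
  by_cases hvab : v a = v b
  · exact subset_span (mem_insert_of_mem _ ⟨hv, hvab⟩)
  · rw [← ne_eq, ZMod.two_ne_iff_eq_add_one] at hvab
    rw [ZMod.two_ne_iff_eq_add_one] at hyab
    have hvy : v - y ∈ D ⊓ eqCoords a b :=
      ⟨D.sub_mem hv hy, by
        simp only [SetLike.mem_coe, mem_eqCoords, Pi.sub_apply, hvab, hyab]
        ring⟩
    rw [← sub_add_cancel v y]
    exact add_mem (subset_span (mem_insert_of_mem _ hvy)) (subset_span (mem_insert _ _))

lemma finrank_inf_eqCoords_add_one (hy : y ∈ D) (hyab : y a ≠ y b) :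
    finrank (ZMod 2) (D ⊓ eqCoords a b : Code n) + 1 = finrank (ZMod 2) D := by
  have hsup := span_insert_inf_eqCoords hy hyab
  rw [span_insert, span_eq] at hsup
  have hdisj : span (ZMod 2) {y} ⊓ (D ⊓ eqCoords a b) = ⊥ := by
    refine eq_bot_iff.2 fun v ⟨hv, _, hvab⟩ => ?_
    obtain ⟨c, rfl⟩ := mem_span_singleton.1 hv
    rcases eq_or_ne c 0 with rfl | hc
    · simp
    · exact absurd (mul_left_cancel₀ hc hvab) hyab
  have := finrank_sup_add_finrank_inf_eq (span (ZMod 2) {y}) (D ⊓ eqCoords a b)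
  rw [hsup, hdisj, finrank_bot, finrank_span_singleton fun h => hyab (by simp [h])] at this
  omega

lemma eq_of_dropLastTwo_eq (ha : (a : ℕ) = n - 2) (hb : (b : ℕ) = n - 1)
    {v w : Fin n → ZMod 2} (h : dropLastTwo n v = dropLastTwo n w) (hva : v a = w a)
    (hvb : v b = w b) : v = w := by
  funext j
  by_cases hj : (j : ℕ) < n - 2
  · exact congrFun h ⟨j, hj⟩
  · obtain rfl | rfl : j = a ∨ j = b := by omega
    exacts [hva, hvb]

lemma dotp_eq_dotp_dropLastTwo_add (ha : (a : ℕ) = n - 2) (hb : (b : ℕ) = n - 1) (hn : 2 ≤ n)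
    (v w : Fin n → ZMod 2) :
    dotp v w = dotp (dropLastTwo n v) (dropLastTwo n w) + v a * w a + v b * w b := by
  obtain ⟨m, rfl⟩ := Nat.exists_eq_add_of_le' hn
  obtain rfl : a = (Fin.last m).castSucc := Fin.ext (by simp [ha])
  obtain rfl : b = Fin.last (m + 1) := Fin.ext (by simp [hb])
  simp only [dotp, Fin.sum_univ_castSucc]
  rfl

lemma dotp_dropLastTwo_of_mem_eqCoords (ha : (a : ℕ) = n - 2) (hb : (b : ℕ) = n - 1)
    (hn : 2 ≤ n) {v w : Fin n → ZMod 2} (hv : v ∈ eqCoords a b) (hw : w ∈ eqCoords a b) :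
    dotp (dropLastTwo n v) (dropLastTwo n w) = dotp v w := by
  rw [dotp_eq_dotp_dropLastTwo_add ha hb hn, mem_eqCoords.1 hv, mem_eqCoords.1 hw, add_assoc,
    CharTwo.add_self_eq_zero, add_zero]

lemma IsSelfDual.eq_zero_of_dropLastTwo_eq_zero (hD : IsSelfDual D) (ha : (a : ℕ) = n - 2)
    (hb : (b : ℕ) = n - 1) (hy : y ∈ D) (hyab : y a ≠ y b) {v : Fin n → ZMod 2}
    (hv : v ∈ D ⊓ eqCoords a b) (h0 : dropLastTwo n v = 0) : v = 0 := by
  have hn : 2 ≤ n := by have := Fin.val_ne_of_ne (ne_of_apply_ne y hyab); omega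
  have hyv : dotp y v = 0 := hD.le hv.1 y hy
  rw [dotp_eq_dotp_dropLastTwo_add ha hb hn, h0, ← mem_eqCoords.1 hv.2,
    ZMod.two_ne_iff_eq_add_one.1 hyab] at hyv
  have hva : v a = 0 := by
    simp only [dotp, Pi.zero_apply, mul_zero, Finset.sum_const_zero, zero_add] at hyv
    rwa [← add_mul, ← add_assoc, CharTwo.add_self_eq_zero, zero_add, one_mul] at hyv
  exact eq_of_dropLastTwo_eq ha hb (h0.trans (map_zero _).symm) hva (mem_eqCoords.1 hv.2 ▸ hva)

lemma IsSelfDual.map_dropLastTwo (hD : IsSelfDual D) (ha : (a : ℕ) = n - 2)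
    (hb : (b : ℕ) = n - 1) (hy : y ∈ D) (hyab : y a ≠ y b) :
    IsSelfDual ((D ⊓ eqCoords a b).map (dropLastTwo n)) := by
  have hn : 2 ≤ n := by have := Fin.val_ne_of_ne (ne_of_apply_ne y hyab); omega
  refine IsSelfOrthogonal.isSelfDual_of_two_mul_finrank_eq ?_ ?_
  · rintro _ ⟨v, hv, rfl⟩ _ ⟨w, hw, rfl⟩
    rw [dotp_dropLastTwo_of_mem_eqCoords ha hb hn hw.2 hv.2]
    exact hD.le hv.1 w hw.1
  · have hinj : Injective ((dropLastTwo n).domRestrict (D ⊓ eqCoords a b)) := by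
      rw [← ker_eq_bot, ker_eq_bot']
      exact fun v hv => Subtype.ext (hD.eq_zero_of_dropLastTwo_eq_zero ha hb hy hyab v.2 hv)
    have hmap := finrank_range_of_inj hinj
    rw [LinearMap.range_domRestrict] at hmap
    have hsub := finrank_inf_eqCoords_add_one hy hyab
    have hdim := hD.two_mul_finrank
    omega

lemma funLeft_swap_eq_self {v : Fin n → ZMod 2} (hv : v ∈ eqCoords a b) :
    funLeft (ZMod 2) (ZMod 2) (Equiv.swap a b) v = v := by
  funext j
  rw [funLeft_apply, Equiv.swap_apply_def]
  split_ifs with hja hjb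
  · exact hja ▸ (mem_eqCoords.1 hv).symm
  · exact hjb ▸ mem_eqCoords.1 hv
  · rfl

lemma add_funLeft_swap {s : Fin n → ZMod 2} (hab : a ≠ b) (hsab : s a ≠ s b) :
    s + funLeft (ZMod 2) (ZMod 2) (Equiv.swap a b) s = Pi.single a 1 + Pi.single b 1 := by
  rw [ZMod.two_ne_iff_eq_add_one] at hsab
  funext j
  rw [Pi.add_apply, funLeft_apply, Equiv.swap_apply_def]
  split_ifs with hja hjb
  · subst hja
    simp only [hsab, Pi.add_apply, Pi.single_eq_same]
    grind
  · subst hjb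
    simp only [hsab, Pi.add_apply, Pi.single_eq_same]
    grind
  · simp [hja, hjb, CharTwo.add_self_eq_zero]

lemma IsSelfDual.mem_of_dotp_eq_zero (hD : IsSelfDual D) (hy : y ∈ D) (hyab : y a ≠ y b)
    {t : Fin n → ZMod 2} (ht : t ∈ dualCode (D ⊓ eqCoords a b)) (hyt : dotp y t = 0) :
    t ∈ D := by
  refine hD.ge ?_
  rw [← span_insert_inf_eqCoords hy hyab, mem_dualCode_span, forall_mem_insert]
  exact ⟨hyt, ht⟩

lemma IsSelfDual.mem_or_funLeft_swap_mem (hD : IsSelfDual D) (hy : y ∈ D) (hyab : y a ≠ y b)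
    {s : Fin n → ZMod 2} (hs : s ∈ dualCode (D ⊓ eqCoords a b)) (hsab : s a ≠ s b) :
    s ∈ D ∨ funLeft (ZMod 2) (ZMod 2) (Equiv.swap a b) s ∈ D := by
  set τ := funLeft (ZMod 2) (ZMod 2) (Equiv.swap a b)
  have hτs : τ s ∈ dualCode (D ⊓ eqCoords a b) := fun w hw => by
    rw [← funLeft_swap_eq_self hw.2, dotp_funLeft_perm]
    exact hs w hw
  have hsum : dotp y s + dotp y (τ s) = 1 := by
    rw [dotp_eq_dotProduct, dotp_eq_dotProduct, ← dotProduct_add,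
      add_funLeft_swap (ne_of_apply_ne y hyab) hsab, dotProduct_add, dotProduct_single,
      dotProduct_single, mul_one, mul_one, ZMod.two_ne_iff_eq_add_one.1 hyab, ← add_assoc,
      CharTwo.add_self_eq_zero, zero_add]
  have hcases : ∀ p q : ZMod 2, p + q = 1 → p = 0 ∨ q = 0 := by decide
  exact (hcases _ _ hsum).imp (hD.mem_of_dotp_eq_zero hy hyab hs)
    (hD.mem_of_dotp_eq_zero hy hyab hτs)

lemma IsSelfDual.exists_perm_map_eq_span_insert (hD : IsSelfDual D) (hy : y ∈ D)
    (hyab : y a ≠ y b) {s : Fin n → ZMod 2} (hs : s ∈ dualCode (D ⊓ eqCoords a b))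
    (hsab : s a ≠ s b) :
    ∃ τ : Equiv.Perm (Fin n), ({τ a, τ b} : Set (Fin n)) = {a, b} ∧
      D.map (funLeft (ZMod 2) (ZMod 2) τ)
        = span (ZMod 2) (insert s ((D ⊓ eqCoords a b : Code n) : Set (Fin n → ZMod 2))) := by
  rcases hD.mem_or_funLeft_swap_mem hy hyab hs hsab with hsD | hτsD
  · refine ⟨1, rfl, ?_⟩
    rw [span_insert_inf_eqCoords hsD hsab]
    exact D.map_id
  · set τ := funLeft (ZMod 2) (ZMod 2) (Equiv.swap a b)
    refine ⟨Equiv.swap a b, by simp [Set.pair_comm], ?_⟩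
    have hτsab : τ s a ≠ τ s b := by simpa [τ] using hsab.symm
    have hττs : τ (τ s) = s := funext fun j => by simp [τ, funLeft_apply]
    have hτ : ((D ⊓ eqCoords a b : Code n) : Set (Fin n → ZMod 2)).EqOn τ _root_.id :=
      fun v hv => funLeft_swap_eq_self hv.2
    conv_lhs => rw [← span_insert_inf_eqCoords hτsD hτsab]
    rw [Submodule.map_span, image_insert_eq, hτ.image_eq_self, hττs]

lemma exists_perm_extend_dropLastTwo (ha : (a : ℕ) = n - 2) (hb : (b : ℕ) = n - 1)
    (σ : Equiv.Perm (Fin (n - 2))) :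
    ∃ π : Equiv.Perm (Fin n), π a = a ∧ π b = b ∧
      (dropLastTwo n).comp (funLeft (ZMod 2) (ZMod 2) π)
        = (funLeft (ZMod 2) (ZMod 2) σ).comp (dropLastTwo n) := by
  refine ⟨σ.extendDomain (Fin.castLEquiv (n.sub_le 2)), ?_, ?_, ?_⟩
  · exact Equiv.Perm.extendDomain_apply_not_subtype _ _ (by omega)
  · exact Equiv.Perm.extendDomain_apply_not_subtype _ _ (by omega)
  · exact LinearMap.ext fun v => funext fun j =>
      congrArg v (Equiv.Perm.extendDomain_apply_image σ (Fin.castLEquiv (n.sub_le 2)) j)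

lemma map_funLeft_inf_eqCoords {π : Equiv.Perm (Fin n)} (hπa : π a = a) (hπb : π b = b) :
    D.map (funLeft (ZMod 2) (ZMod 2) π) ⊓ eqCoords a b
      = (D ⊓ eqCoords a b).map (funLeft (ZMod 2) (ZMod 2) π) := by
  ext v
  constructor
  · rintro ⟨⟨u, hu, rfl⟩, huab⟩
    exact ⟨u, ⟨hu, by simpa [mem_eqCoords, funLeft_apply, hπa, hπb] using huab⟩, rfl⟩
  · rintro ⟨u, ⟨hu, huab⟩, rfl⟩
    exact ⟨mem_map_of_mem hu, by simpa [mem_eqCoords, funLeft_apply, hπa, hπb] using huab⟩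

end LastTwoCoords

section SystematicRows

variable {k : ℕ} (A : Matrix (Fin (k - 1)) (Fin (k - 1)) (ZMod 2)) (x : Fin (k - 1) → ZMod 2)

lemma sysRowIA_castLE (i r : Fin (k - 1)) :
    sysRowIA k A i (Fin.castLE (by omega) r) = (Pi.single i 1 : Fin (k - 1) → ZMod 2) r := by
  simp [sysRowIA, Pi.single_apply, Fin.ext_iff]

lemma sysRow_castLE (i r : Fin (k - 1)) :
    sysRow k A x i (Fin.castLE (by omega) r) = (Pi.single i 1 : Fin (k - 1) → ZMod 2) r := by
  simp [sysRow, Pi.single_apply, Fin.ext_iff]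

lemma dropLastTwo_sysRow (i : Fin (k - 1)) :
    dropLastTwo (2 * k) (sysRow k A x i) = sysRowIA k A i := by
  funext j
  have := j.isLt
  simp [sysRow, sysRowIA]

lemma sysRow_of_le (i : Fin (k - 1)) {j : Fin (2 * k)} (hj : 2 * k - 2 ≤ j) :
    sysRow k A x i j = x i := by
  simp [sysRow, show ¬ (j : ℕ) < k - 1 by omega, show ¬ (j : ℕ) < 2 * k - 2 by omega]

lemma sysRow0_ne {a b : Fin (2 * k)} (ha : (a : ℕ) = 2 * k - 2) (hb : (b : ℕ) = 2 * k - 1) :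
    sysRow0 k x a ≠ sysRow0 k x b := by
  have := b.isLt
  simp [sysRow0, ha, hb, show ¬ 2 * k - 2 < k - 1 by omega, show ¬ 2 * k - 1 < k - 1 by omega,
    show 2 * k - 1 ≠ 2 * k - 2 by omega]

lemma dotp_sysRow_sysRow0 (i : Fin (k - 1)) : dotp (sysRow k A x i) (sysRow0 k x) = 0 := by
  have := i.isLt
  have hne : Fin.castLE (by omega) i ≠ (⟨2 * k - 2, by omega⟩ : Fin (2 * k)) :=
    Fin.ne_of_val_ne (by simp only [Fin.val_castLE]; omega)
  rw [dotp, Fintype.sum_eq_add _ _ hne]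
  · simp [sysRow, sysRow0, show ¬ 2 * k - 2 < k - 1 by omega, CharTwo.add_self_eq_zero]
  · intro j hj
    simp only [ne_eq, Fin.ext_iff, Fin.val_castLE] at hj
    simp only [sysRow, sysRow0, hj.1, hj.2, ↓reduceIte, mul_dite, dite_mul, zero_mul, mul_zero,
      dite_eq_right_iff, dite_eq_left_iff, not_lt]
    omega

end SystematicRows

lemma IsSelfDual.exists_perm_map_eq_span_sysRowIA {k : ℕ} {P : Code (2 * k - 2)}
    (hP : IsSelfDual P) :
    ∃ (σ : Equiv.Perm (Fin (2 * k - 2))) (A : Matrix (Fin (k - 1)) (Fin (k - 1)) (ZMod 2)),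
      P.map (funLeft (ZMod 2) (ZMod 2) σ) = span (ZMod 2) (range (sysRowIA k A)) := by
  have hmn : k - 1 ≤ 2 * k - 2 := by omega
  have hdim : finrank (ZMod 2) P = k - 1 := by have := hP.two_mul_finrank; omega
  obtain ⟨σ, hσ⟩ := P.exists_perm_isInformationSet_castLE hdim hmn
  have hdimσ : finrank (ZMod 2) (P.map (funLeft (ZMod 2) (ZMod 2) σ)) = k - 1 := by
    have := (hP.map_perm σ).two_mul_finrank
    omega
  obtain ⟨g, hgP, hg⟩ := hσ.exists_castLE_eq_single hmn hdimσ
  refine ⟨σ, fun i j => g i ⟨k - 1 + j, by omega⟩, ?_⟩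
  rw [hσ.eq_span hmn hgP hg]
  congr
  funext i j
  by_cases hj : (j : ℕ) < k - 1
  · simpa [sysRowIA, hj, Pi.single_apply, Fin.ext_iff] using hg i ⟨j, hj⟩
  · simp only [sysRowIA, dif_neg hj]
    exact congrArg (g i) (Fin.ext (Nat.add_sub_of_le (not_lt.1 hj)).symm)

lemma IsSelfDual.exists_inf_eqCoords_eq_span_sysRow {k : ℕ} {a b : Fin (2 * k)}
    (ha : (a : ℕ) = 2 * k - 2) (hb : (b : ℕ) = 2 * k - 1) {D : Code (2 * k)} (hD : IsSelfDual D)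
    {y : Fin (2 * k) → ZMod 2} (hy : y ∈ D) (hyab : y a ≠ y b)
    {A : Matrix (Fin (k - 1)) (Fin (k - 1)) (ZMod 2)}
    (hDA : (D ⊓ eqCoords a b).map (dropLastTwo (2 * k)) = span (ZMod 2) (range (sysRowIA k A))) :
    ∃ x, D ⊓ eqCoords a b = span (ZMod 2) (range (sysRow k A x)) := by
  have hlift : ∀ i, ∃ v ∈ D ⊓ eqCoords a b, dropLastTwo (2 * k) v = sysRowIA k A i :=
    fun i => mem_map.1 (hDA.ge (subset_span (mem_range_self i)))
  choose g hgD hg using hlift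
  set x : Fin (k - 1) → ZMod 2 := fun i => g i a
  have hgx : ∀ i, g i = sysRow k A x i := fun i =>
    eq_of_dropLastTwo_eq ha hb (by rw [hg, dropLastTwo_sysRow])
      (sysRow_of_le (j := a) A x i (by omega)).symm
      ((mem_eqCoords.1 (hgD i).2).symm.trans (sysRow_of_le (j := b) A x i (by omega)).symm)
  have hinfo : IsInformationSet (D ⊓ eqCoords a b) (Fin.castLE (by omega : k - 1 ≤ 2 * k)) :=
    fun v hv h0 => hD.eq_zero_of_dropLastTwo_eq_zero ha hb hy hyab hv <|
      isInformationSet_span (by omega) (sysRowIA_castLE A) _ (hDA ▸ mem_map_of_mem hv) h0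
  exact ⟨x, hinfo.eq_span _ (fun i => hgx i ▸ hgD i) (sysRow_castLE A x)⟩

lemma IsSelfDual.exists_perm_inf_eqCoords_eq_span_sysRow {k : ℕ} {a b : Fin (2 * k)}
    (ha : (a : ℕ) = 2 * k - 2) (hb : (b : ℕ) = 2 * k - 1) {C : Code (2 * k)} (hC : IsSelfDual C)
    {y : Fin (2 * k) → ZMod 2} (hy : y ∈ C) (hyab : y a ≠ y b) :
    ∃ π : Equiv.Perm (Fin (2 * k)), π a = a ∧ π b = b ∧
      ∃ x A, C.map (funLeft (ZMod 2) (ZMod 2) π) ⊓ eqCoords a b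
          = span (ZMod 2) (range (sysRow k A x)) ∧
        IsSelfDual (span (ZMod 2) (range (sysRowIA k A))) := by
  have hP := hC.map_dropLastTwo ha hb hy hyab
  obtain ⟨σ, A, hσA⟩ := hP.exists_perm_map_eq_span_sysRowIA
  obtain ⟨π, hπa, hπb, hπσ⟩ := exists_perm_extend_dropLastTwo ha hb σ
  have hDA : (C.map (funLeft (ZMod 2) (ZMod 2) π) ⊓ eqCoords a b).map (dropLastTwo (2 * k))
      = span (ZMod 2) (range (sysRowIA k A)) := by
    rw [map_funLeft_inf_eqCoords hπa hπb, ← map_comp, hπσ, map_comp, hσA]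
  obtain ⟨x, hx⟩ := (hC.map_perm π).exists_inf_eqCoords_eq_span_sysRow ha hb
    (mem_map_of_mem hy) (by simpa [funLeft_apply, hπa, hπb] using hyab) hDA
  exact ⟨π, hπa, hπb, x, A, hx, hσA ▸ hP.map_perm σ⟩

theorem equivalent_to_systematic_form_general {k : ℕ} (C : Code (2*k))
    (h : IsSelfDual C)
    (a b : Fin (2*k)) (ha : (a : ℕ) = 2*k-2) (hb : (b : ℕ) = 2*k-1)
    (hne : ∃ y ∈ C, y a ≠ y b) :
    ∃ (π : Equiv.Perm (Fin (2*k))) (x : Fin (k-1) → ZMod 2)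
      (A : Matrix (Fin (k-1)) (Fin (k-1)) (ZMod 2)),
      ({π a, π b} : Set (Fin (2*k))) = {a, b} ∧
      Submodule.map (LinearMap.funLeft (ZMod 2) (ZMod 2) π) C
        = Submodule.span (ZMod 2) (insert (sysRow0 k x) (Set.range (sysRow k A x))) ∧
      IsSelfDual (Submodule.span (ZMod 2) (Set.range (sysRowIA k A))) := by
  obtain ⟨y, hy, hyab⟩ := hne
  obtain ⟨π, hπa, hπb, x, A, hD0, hIA⟩ := h.exists_perm_inf_eqCoords_eq_span_sysRow ha hb hy hyab
  have hs : sysRow0 k x ∈ dualCode (C.map (funLeft (ZMod 2) (ZMod 2) π) ⊓ eqCoords a b) := by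
    rw [hD0, mem_dualCode_span]
    rintro _ ⟨i, rfl⟩
    exact dotp_sysRow_sysRow0 A x i
  obtain ⟨τ, hτ, hτD⟩ := (h.map_perm π).exists_perm_map_eq_span_insert (mem_map_of_mem hy)
    (by simpa [funLeft_apply, hπa, hπb] using hyab) hs (sysRow0_ne x ha hb)
  refine ⟨π * τ, x, A, ?_, ?_, hIA⟩
  · rw [Equiv.Perm.mul_apply, Equiv.Perm.mul_apply, ← image_pair, hτ, image_pair, hπa, hπb]
  · rw [Equiv.Perm.coe_mul, funLeft_comp, map_comp, hτD, hD0, span_insert, span_insert, span_eq]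

theorem equivalent_to_systematic_form {k : ℕ} (hk : 2 ≤ k) (C : Code (2*k))
    (h : IsSelfDual C)
    (a b : Fin (2*k)) (ha : (a : ℕ) = 2*k-2) (hb : (b : ℕ) = 2*k-1)
    (hne : ∃ y ∈ C, y a ≠ y b) :
    ∃ (π : Equiv.Perm (Fin (2*k))) (x : Fin (k-1) → ZMod 2)
      (A : Matrix (Fin (k-1)) (Fin (k-1)) (ZMod 2)),
      ({π a, π b} : Set (Fin (2*k))) = {a, b} ∧
      Submodule.map (LinearMap.funLeft (ZMod 2) (ZMod 2) π) C
        = Submodule.span (ZMod 2) (insert (sysRow0 k x) (Set.range (sysRow k A x))) ∧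
      IsSelfDual (Submodule.span (ZMod 2) (Set.range (sysRowIA k A))) :=
  equivalent_to_systematic_form_general C h a b ha hb hne
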